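/- arXiv:1506.04624 — 3 statements merged into one kernel-verified Lean document; each statement's English description precedes it below -/
import Mathlib

section
/- The complex vector space ℂ^16 with its standard Hermitian inner product g does not admit ten complex-linear endomorphisms I₀,…,I₉ satisfying Iₐ² = Id, g(Iₐ x, y) = g(x, Iₐ y) for all a, and Iₐ∘I_b = -I_b∘Iₐ for all a ≠ b. -/
/-!
Let `I a` be anticommuting involutions on `V`, indexed by a set of even size, and
`I_S = ∏_{a ∈ S} I a`. Conjugating `I_S I_T` by `I b` multiplies it by
`(-1) ^ (#S + #T + [b ∈ S] + [b ∈ T])`, and some `b` makes this exponent odd: when `#S + #T` is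
even because `S ≠ T`, when it is odd because `T ≠ Sᶜ` by evenness. So `tr (I_S I_T) = 0` for
`S ≠ T`, while `I_S² = ±1` has trace `±dim V ≠ 0`. The `I_S` are therefore orthogonal and
anisotropic for the trace form, hence linearly independent: `2 ^ 10 ≤ dim End ℂ¹⁶ = 256` fails.
-/

open Finset

section Ring

variable {A ι : Type*} [Ring A]

theorem mul_mul_mul_eq_of_mul_self_eq_one {u : A} (hu : u * u = 1) (x y : A) :
    u * (x * y) * u = (u * x * u) * (u * y * u) := by
  calc u * (x * y) * u = u * x * (u * u) * y * u := by rw [hu]; noncomm_ring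
    _ = (u * x * u) * (u * y * u) := by noncomm_ring

variable {I : ι → A} (hsq : ∀ a, I a * I a = 1)
  (hanti : ∀ a b, a ≠ b → I a * I b = -(I b * I a))
include hsq hanti

theorem mul_mul_self_eq_neg_of_ne {a b : ι} (hab : a ≠ b) : I b * I a * I b = -I a := by
  rw [hanti b a hab.symm, neg_mul, mul_assoc, hsq, mul_one]

variable [DecidableEq ι]

theorem mul_list_prod_map_mul (b : ι) (l : List ι) :
    I b * (l.map I).prod * I b = (-1) ^ (l.length + l.count b) * (l.map I).prod := by
  induction l with
  | nil => simp [hsq]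
  | cons c t ih =>
    rw [List.map_cons, List.prod_cons, mul_mul_mul_eq_of_mul_self_eq_one (hsq b), ih,
      List.length_cons, List.count_cons, ← mul_assoc,
      ((Commute.neg_one_right _).pow_right _).eq, mul_assoc]
    by_cases hcb : c = b
    · subst hcb
      simp [hsq, ← add_assoc, add_right_comm _ 1, pow_succ]
    · rw [mul_mul_self_eq_neg_of_ne hsq hanti hcb, if_neg (by simpa using hcb), add_zero,
        add_right_comm, pow_succ]
      simp

theorem list_prod_map_mul_self {l : List ι} (hl : l.Nodup) :
    (l.map I).prod * (l.map I).prod = (-1) ^ l.length.choose 2 := by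
  induction l with
  | nil => simp
  | cons a t ih =>
    obtain ⟨hat, ht⟩ := List.nodup_cons.mp hl
    calc (I a * (t.map I).prod) * (I a * (t.map I).prod)
        = (I a * (t.map I).prod * I a) * (t.map I).prod := by noncomm_ring
      _ = (-1) ^ ((a :: t).length.choose 2) := by
        rw [mul_list_prod_map_mul hsq hanti, List.count_eq_zero_of_not_mem hat, mul_assoc, ih ht,
          ← pow_add, List.length_cons, Nat.choose_succ_succ', Nat.choose_one_right, add_zero]

end Ring

theorem exists_odd_card_add_card_add_indicator {ι : Type*} [Fintype ι] [DecidableEq ι]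
    (hι : Even (Fintype.card ι)) {S T : Finset ι} (hST : S ≠ T) :
    ∃ b, Odd (#S + #T + ((if b ∈ S then 1 else 0) + (if b ∈ T then 1 else 0))) := by
  rcases Nat.even_or_odd (#S + #T) with heven | hodd
  · obtain ⟨b, hb⟩ : ∃ b, ¬(b ∈ S ↔ b ∈ T) := by
      by_contra! h
      exact hST (Finset.ext h)
    refine ⟨b, ?_⟩
    by_cases hbS : b ∈ S <;> simp_all [parity_simps]
  · obtain ⟨b, hb⟩ : ∃ b, (b ∈ S ↔ b ∈ T) := by
      by_contra! h
      have hS : S = Tᶜ := by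
        ext b
        have := h b
        rw [mem_compl]
        tauto
      rw [hS, card_compl, Nat.sub_add_cancel (card_le_univ T)] at hodd
      exact Nat.not_odd_iff_even.mpr hι hodd
    refine ⟨b, ?_⟩
    by_cases hbS : b ∈ S <;> simp_all [parity_simps]

section Trace

variable {K V : Type*} [Field K] [CharZero K] [AddCommGroup V] [Module K V]

theorem LinearMap.trace_eq_zero_of_mul_mul_eq_neg {u f : Module.End K V} (hu : u * u = 1)
    (h : u * f * u = -f) : LinearMap.trace K V f = 0 := by
  have : LinearMap.trace K V f = -LinearMap.trace K V f := by
    rw [← map_neg, ← h, LinearMap.trace_mul_comm, ← mul_assoc, hu, one_mul]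
  exact self_eq_neg.mp this

variable {ι : Type*} [DecidableEq ι] {I : ι → Module.End K V} (hsq : ∀ a, I a * I a = 1)
  (hanti : ∀ a b, a ≠ b → I a * I b = -(I b * I a))
include hsq hanti

theorem LinearMap.trace_list_prod_map_eq_zero {l : List ι} {b : ι}
    (hodd : Odd (l.length + l.count b)) : LinearMap.trace K V (l.map I).prod = 0 :=
  trace_eq_zero_of_mul_mul_eq_neg (hsq b) <| by
    rw [mul_list_prod_map_mul hsq hanti, hodd.neg_one_pow, neg_one_mul]

variable [FiniteDimensional K V] [Nontrivial V] [Fintype ι]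

theorem linearIndependent_finset_toList_prod (hι : Even (Fintype.card ι)) :
    LinearIndependent K fun S : Finset ι => (S.toList.map I).prod := by
  let B : LinearMap.BilinForm K (Module.End K V) :=
    (LinearMap.mul K (Module.End K V)).compr₂ (LinearMap.trace K V)
  have count_toList (S : Finset ι) (b : ι) : S.toList.count b = if b ∈ S then 1 else 0 := by
    simp only [S.nodup_toList.count, mem_toList]
  refine LinearMap.BilinForm.linearIndependent_of_iIsOrtho (B := B) ?_ fun S => ?_
  · intro S T hST
    obtain ⟨b, hb⟩ := exists_odd_card_add_card_add_indicator hι hST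
    show LinearMap.trace K V (_ * _) = 0
    rw [← List.prod_append, ← List.map_append]
    refine LinearMap.trace_list_prod_map_eq_zero hsq hanti (b := b) ?_
    rwa [List.length_append, List.count_append, length_toList, length_toList, count_toList,
      count_toList]
  · show LinearMap.trace K V (_ * _) ≠ 0
    have hd : (Module.finrank K V : K) ≠ 0 := Nat.cast_ne_zero.mpr Module.finrank_pos.ne'
    rw [list_prod_map_mul_self hsq hanti S.nodup_toList]
    rcases neg_one_pow_eq_or (Module.End K V) ((#S).choose 2) with h | h <;>
      simp [h, LinearMap.trace_one, hd]

theorem two_pow_card_le_finrank_sq (hι : Even (Fintype.card ι)) :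
    2 ^ Fintype.card ι ≤ Module.finrank K V ^ 2 := by
  have := (linearIndependent_finset_toList_prod hsq hanti hι).fintype_card_le_finrank
  rwa [Fintype.card_finset, Module.finrank_linearMap, ← pow_two] at this

end Trace

/-- `ℂ¹⁶` with its standard Hermitian inner product admits no family of ten
ℂ-linear, self-adjoint, pairwise anticommuting involutions. -/
theorem no_ten_anticommuting_selfadjoint_involutions_on_C16 :
    ¬ ∃ I : Fin 10 →
        (EuclideanSpace ℂ (Fin 16) →ₗ[ℂ] EuclideanSpace ℂ (Fin 16)),
      (∀ a, I a ∘ₗ I a = LinearMap.id) ∧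
      (∀ a (x y : EuclideanSpace ℂ (Fin 16)),
        (inner ℂ (I a x) y : ℂ) = inner ℂ x (I a y)) ∧
      (∀ a b, a ≠ b → I a ∘ₗ I b = -(I b ∘ₗ I a)) := by
  rintro ⟨I, hsq, -, hanti⟩
  have := two_pow_card_le_finrank_sq hsq hanti (by decide)
  rw [Fintype.card_fin, finrank_euclideanSpace_fin] at this
  norm_num at this
end

section
/- Given the Clifford system I₁,…,I₉ on ℝ^16 ≅ 𝕆², the ten block endomorphisms of ℝ^32 ≅ ℝ^16 ⊕ ℝ^16 defined by P₀ = [[0,Id],[Id,0]], P_j = [[0,-J_{1,j+1}],[J_{1,j+1},0]] for j = 1,…,8 (where J_{1β} = I₁∘I_β), and P₉ = [[Id,0],[0,-Id]], form a Clifford system with m = 9 on ℝ^32: each Pₐ is symmetric and orthogonal with Pₐ² = Id, and PₐP_β = -P_βPₐ for α ≠ β. -/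
/-!
If `J₁, …, J_k` are skew-adjoint, pairwise anticommuting complex structures on `E`, then on
`E ⊕ E` the swap `[[0, 1], [1, 0]]`, the blocks `[[0, -J_j], [J_j, 0]]` and the reflection
`[[1, 0], [0, -1]]` are symmetric involutions that pairwise anticommute. For a Clifford system
`I₁, …, I₉` the maps `J_β = I₁ I_β` (`β ≠ 1`) are such complex structures, since
`I₁ I_β I₁ I_γ = -I_β I_γ`.
-/

open scoped InnerProductSpace

theorem mul_mul_mul_eq_neg_of_mul_self_eq_one {R : Type*} [Ring R] {a b : R} (c : R)
    (ha : a * a = 1) (hab : a * b = -(b * a)) : a * b * (a * c) = -(b * c) := by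
  calc a * b * (a * c) = a * (b * a) * c := by simp only [mul_assoc]
    _ = -(a * a * b * c) := by rw [← neg_neg (b * a), ← hab]; noncomm_ring
    _ = -(b * c) := by rw [ha, one_mul]

theorem Fin.eq_zero_or_eq_last_or_exists_eq_succ {k : ℕ} (a : Fin (k + 2)) :
    a = 0 ∨ a = Fin.last (k + 1) ∨ ∃ j : Fin k, a = j.castSucc.succ := by
  rcases Fin.eq_zero_or_eq_succ a with rfl | ⟨b, rfl⟩
  · exact .inl rfl
  rcases Fin.eq_castSucc_or_eq_last b with ⟨j, rfl⟩ | rfl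
  · exact .inr (.inr ⟨j, rfl⟩)
  · exact .inr (.inl rfl)

namespace CliffordSystem

section Blocks

variable {R M : Type*} [Ring R] [AddCommGroup M] [Module R M]

def swap : Module.End R (M × M) := (LinearMap.snd R M M).prod (LinearMap.fst R M M)

def reflect : Module.End R (M × M) := (LinearMap.fst R M M).prod (-(LinearMap.snd R M M))

def offDiag (J : Module.End R M) : Module.End R (M × M) :=
  (-(J ∘ₗ LinearMap.snd R M M)).prod (J ∘ₗ LinearMap.fst R M M)

@[simp] theorem swap_apply (p : M × M) : (swap : Module.End R (M × M)) p = (p.2, p.1) := rfl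

@[simp] theorem reflect_apply (p : M × M) : (reflect : Module.End R (M × M)) p = (p.1, -p.2) :=
  rfl

@[simp] theorem offDiag_apply (J : Module.End R M) (p : M × M) :
    offDiag J p = (-J p.2, J p.1) := rfl

theorem swap_mul_swap : (swap : Module.End R (M × M)) * swap = 1 := by
  ext <;> simp

theorem reflect_mul_reflect : (reflect : Module.End R (M × M)) * reflect = 1 := by
  ext <;> simp

theorem offDiag_mul_offDiag_self {J : Module.End R M} (hJ : J * J = -1) :
    offDiag J * offDiag J = 1 := by
  have hJ' (x : M) : J (J x) = -x := by simpa using LinearMap.congr_fun hJ x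
  ext <;> simp [hJ']

theorem swap_mul_reflect :
    (swap : Module.End R (M × M)) * reflect = -(reflect * swap) := by
  ext <;> simp

theorem swap_mul_offDiag (J : Module.End R M) : swap * offDiag J = -(offDiag J * swap) := by
  ext <;> simp

theorem reflect_mul_offDiag (J : Module.End R M) :
    reflect * offDiag J = -(offDiag J * reflect) := by
  ext <;> simp

theorem offDiag_mul_offDiag {J K : Module.End R M} (hJK : J * K = -(K * J)) :
    offDiag J * offDiag K = -(offDiag K * offDiag J) := by
  have hJK' (x : M) : J (K x) = -K (J x) := by simpa using LinearMap.congr_fun hJK x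
  ext <;> simp [hJK']

end Blocks

section InnerProduct

variable {E : Type*} [NormedAddCommGroup E] [InnerProductSpace ℝ E]

def prodInner (p q : E × E) : ℝ := ⟪p.1, q.1⟫_ℝ + ⟪p.2, q.2⟫_ℝ

def IsProdSymmetric (T : Module.End ℝ (E × E)) : Prop :=
  ∀ p q, prodInner (T p) q = prodInner p (T q)

theorem isProdSymmetric_swap : IsProdSymmetric (swap : Module.End ℝ (E × E)) := fun _ _ =>
  add_comm _ _

theorem isProdSymmetric_reflect : IsProdSymmetric (reflect : Module.End ℝ (E × E)) := by
  intro p q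
  simp [prodInner, inner_neg_left, inner_neg_right]

theorem isProdSymmetric_offDiag {J : Module.End ℝ E} (hJ : ∀ x y, ⟪J x, y⟫_ℝ = -⟪x, J y⟫_ℝ) :
    IsProdSymmetric (offDiag J) := by
  intro p q
  simp only [prodInner, offDiag_apply, inner_neg_left, inner_neg_right, hJ]
  ring

theorem IsProdSymmetric.prodInner_map_map {T : Module.End ℝ (E × E)} (hT : IsProdSymmetric T)
    (hT2 : T * T = 1) (p q : E × E) : prodInner (T p) (T q) = prodInner p q := by
  rw [hT, ← Module.End.mul_apply, hT2, Module.End.one_apply]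

theorem inner_mul_apply_left_eq_neg {A B : Module.End ℝ E} (hA : A.IsSymmetric)
    (hB : B.IsSymmetric) (hAB : A * B = -(B * A)) (x y : E) :
    ⟪(A * B) x, y⟫_ℝ = -⟪x, (A * B) y⟫_ℝ := by
  rw [Module.End.mul_apply, hA, hB, ← Module.End.mul_apply, ← inner_neg_right,
    ← LinearMap.neg_apply, hAB, neg_neg]

end InnerProduct

variable {E : Type*} [NormedAddCommGroup E] [InnerProductSpace ℝ E]

structure IsSymmetric {ι : Type*} (P : ι → Module.End ℝ (E × E)) : Prop where
  isProdSymmetric : ∀ a, IsProdSymmetric (P a)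
  mul_self : ∀ a, P a * P a = 1
  anticomm : ∀ a b, a ≠ b → P a * P b = -(P b * P a)

theorem isSymmetric_of_complexStructures {k : ℕ} (J : Fin k → Module.End ℝ E)
    (hskew : ∀ j x y, ⟪J j x, y⟫_ℝ = -⟪x, J j y⟫_ℝ) (hsq : ∀ j, J j * J j = -1)
    (hanti : ∀ i j, i ≠ j → J i * J j = -(J j * J i)) (P : Fin (k + 2) → Module.End ℝ (E × E))
    (hP0 : P 0 = swap) (hPj : ∀ j : Fin k, P j.castSucc.succ = offDiag (J j))
    (hPlast : P (Fin.last (k + 1)) = reflect) : IsSymmetric P := by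
  have anticomm_symm {S T : Module.End ℝ (E × E)} (h : S * T = -(T * S)) : T * S = -(S * T) :=
    neg_eq_iff_eq_neg.mp h.symm
  refine ⟨fun a => ?_, fun a => ?_, fun a b hab => ?_⟩
  · rcases Fin.eq_zero_or_eq_last_or_exists_eq_succ a with rfl | rfl | ⟨j, rfl⟩
    · exact hP0 ▸ isProdSymmetric_swap
    · exact hPlast ▸ isProdSymmetric_reflect
    · exact hPj j ▸ isProdSymmetric_offDiag (hskew j)
  · rcases Fin.eq_zero_or_eq_last_or_exists_eq_succ a with rfl | rfl | ⟨j, rfl⟩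
    · exact hP0 ▸ swap_mul_swap
    · exact hPlast ▸ reflect_mul_reflect
    · exact hPj j ▸ offDiag_mul_offDiag_self (hsq j)
  rcases Fin.eq_zero_or_eq_last_or_exists_eq_succ a with rfl | rfl | ⟨i, rfl⟩ <;>
    rcases Fin.eq_zero_or_eq_last_or_exists_eq_succ b with rfl | rfl | ⟨j, rfl⟩ <;>
    simp only [hP0, hPlast, hPj]
  · exact absurd rfl hab
  · exact swap_mul_reflect
  · exact swap_mul_offDiag _
  · exact anticomm_symm swap_mul_reflect
  · exact absurd rfl hab
  · exact reflect_mul_offDiag _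
  · exact anticomm_symm (swap_mul_offDiag _)
  · exact anticomm_symm (reflect_mul_offDiag _)
  · exact offDiag_mul_offDiag (hanti i j fun h => hab (h ▸ rfl))

end CliffordSystem

open CliffordSystem in
/-- Given the Spin(9) Clifford system `I₁,…,I₉` on `ℝ¹⁶`, the ten block
endomorphisms of `ℝ³² = ℝ¹⁶ ⊕ ℝ¹⁶` given by `P₀ = [[0,Id],[Id,0]]`,
`P_j = [[0,-J_{1,j+1}],[J_{1,j+1},0]]` with `J_{1β} = I₁∘I_β` for `j = 1,…,8`,
and `P₉ = [[Id,0],[0,-Id]]` form a Clifford system with `m = 9` on `ℝ³²`: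
each `Pₐ` is symmetric and orthogonal with `Pₐ² = Id`, and they pairwise
anticommute. -/
theorem spin10_clifford_system_on_R32
    (I : Fin 9 → Module.End ℝ (EuclideanSpace ℝ (Fin 16)))
    (hsa : ∀ a (x y : EuclideanSpace ℝ (Fin 16)),
      (inner ℝ (I a x) y : ℝ) = inner ℝ x (I a y))
    (hinv : ∀ a, I a * I a = 1)
    (hanti : ∀ a b, a ≠ b → I a * I b = -(I b * I a))
    (P : Fin 10 → (EuclideanSpace ℝ (Fin 16) × EuclideanSpace ℝ (Fin 16) →ₗ[ℝ]
      EuclideanSpace ℝ (Fin 16) × EuclideanSpace ℝ (Fin 16)))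
    (hP0 : P 0 = (LinearMap.snd ℝ _ _).prod (LinearMap.fst ℝ _ _))
    (hPj : ∀ j : Fin 8, P ⟨j.1 + 1, by omega⟩ =
      (-(((I 0 * I ⟨j.1 + 1, by omega⟩ :
          Module.End ℝ (EuclideanSpace ℝ (Fin 16))) :
          EuclideanSpace ℝ (Fin 16) →ₗ[ℝ] EuclideanSpace ℝ (Fin 16)) ∘ₗ
        LinearMap.snd ℝ _ _)).prod
      (((I 0 * I ⟨j.1 + 1, by omega⟩ :
          Module.End ℝ (EuclideanSpace ℝ (Fin 16))) :
          EuclideanSpace ℝ (Fin 16) →ₗ[ℝ] EuclideanSpace ℝ (Fin 16)) ∘ₗ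
        LinearMap.fst ℝ _ _))
    (hP9 : P 9 = (LinearMap.fst ℝ _ _).prod (-(LinearMap.snd ℝ _ _))) :
    (∀ a p q,
      (inner ℝ (P a p).1 q.1 : ℝ) + (inner ℝ (P a p).2 q.2 : ℝ)
        = (inner ℝ p.1 (P a q).1 : ℝ) + (inner ℝ p.2 (P a q).2 : ℝ)) ∧
    (∀ a p q,
      (inner ℝ (P a p).1 (P a q).1 : ℝ) + (inner ℝ (P a p).2 (P a q).2 : ℝ)
        = (inner ℝ p.1 q.1 : ℝ) + (inner ℝ p.2 q.2 : ℝ)) ∧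
    (∀ a, P a ∘ₗ P a = LinearMap.id) ∧
    (∀ a b, a ≠ b → P a ∘ₗ P b = -(P b ∘ₗ P a)) := by
  have hJ (j : Fin 8) (c : Module.End ℝ (EuclideanSpace ℝ (Fin 16))) :=
    mul_mul_mul_eq_neg_of_mul_self_eq_one c (hinv 0) (hanti 0 j.succ (Fin.succ_ne_zero j).symm)
  have hP := isSymmetric_of_complexStructures (fun j : Fin 8 => I 0 * I j.succ)
    (fun j => inner_mul_apply_left_eq_neg (hsa 0) (hsa _) (hanti 0 _ (Fin.succ_ne_zero j).symm))
    (fun j => by rw [hJ, hinv])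
    (fun i j hij => by
      rw [hJ, hJ, hanti _ _ (Fin.succ_injective _ |>.ne hij), neg_neg])
    P hP0 hPj hP9
  exact ⟨hP.isProdSymmetric, fun a => hP.isProdSymmetric a |>.prodInner_map_map (hP.mul_self a),
    hP.mul_self, hP.anticomm⟩
end

section
/- For the skew-symmetric 9×9 matrix ψ^C = (ψ_{αβ})_{1≤α,β≤9} of Kähler 2-forms associated with the complex structures J_{αβ} = Iₐ∘I_β of the standard Spin(9) Clifford system on ℝ^16, the second coefficient of the characteristic polynomial vanishes: τ₂(ψ^C) = Σ_{1≤α<β≤9} ψ_{αβ}² = 0. -/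
/-!
For a Clifford system `I₁, …, I₉` on `ℝ¹⁶` let `I_S` be the ordered product over `S ⊆ {1, …, 9}`
and `I_Sᵀ = I_S⁻¹` the product in reverse order. For `|S| + |T| < 9` some `I_a` anticommutes
with `I_Tᵀ I_S` unless `S = T`, so `tr(I_Tᵀ I_S) = 16 δ_{ST}`: the `256` products with `|S| ≤ 4`
form a basis of `End(ℝ¹⁶)`, and expanding a rank-one map in it gives the Fierz identity
`Σ_S ⟨I_S x, a⟩ I_S y = 16 ⟨x, y⟩ a`. Contracting this identity in the exterior algebra gives
`Σ_S ψ(I_S)² = 0`; conjugating it first by `X ↦ Σ_a I_a X I_a`, which multiplies `I_S` by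
`λ(|S|)` with `λ(k) = (-1)ᵏ (9 - 2k)`, gives `Σ_S λ(|S|) ψ(I_S)² = -16 Σ_a ψ(I_a)² = 0`.
Since `I_S` is symmetric, hence `ψ(I_S) = 0`, when `|S| ∈ {0, 1, 4}`, only the grades `2` and
`3` survive, and the two identities force the grade-`2` sum `Σ_{α<β} ψ_{αβ}²` to vanish.
-/

noncomputable section

/-- The element of the exterior algebra of `ℝ¹⁶` representing (a fixed nonzero
multiple of) the Kähler 2-form `ψ_J(X,Y) = ⟨JX,Y⟩` of a skew-adjoint
endomorphism `J`, namely `Σ_k e_k ∧ J e_k` over the standard orthonormal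
basis. -/
def kaehlerFormR16 (J : Module.End ℝ (EuclideanSpace ℝ (Fin 16))) :
    ExteriorAlgebra ℝ (EuclideanSpace ℝ (Fin 16)) :=
  ∑ k : Fin 16,
    ExteriorAlgebra.ι ℝ (EuclideanSpace.single k (1 : ℝ)) *
      ExteriorAlgebra.ι ℝ (J (EuclideanSpace.single k (1 : ℝ)))

open scoped RealInnerProductSpace

theorem Finset.exists_odd_card_erase_add_card_erase {ι : Type*} [Fintype ι] [DecidableEq ι]
    {S T : Finset ι} (hne : S ≠ T) (hcard : S.card + T.card < Fintype.card ι) :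
    ∃ a, Odd ((S.erase a).card + (T.erase a).card) := by
  rcases Nat.even_or_odd (S.card + T.card) with hpar | hpar
  · obtain ⟨a, ha⟩ : ∃ a, ¬(a ∈ S ↔ a ∈ T) := by
      by_contra! h
      exact hne (Finset.ext h)
    refine ⟨a, ?_⟩
    rw [Nat.even_iff] at hpar
    rw [Nat.odd_iff, Finset.card_erase_eq_ite, Finset.card_erase_eq_ite]
    split_ifs with haS haT haT
    · exact absurd (iff_of_true haS haT) ha
    · have := Finset.card_pos.2 ⟨a, haS⟩
      omega
    · have := Finset.card_pos.2 ⟨a, haT⟩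
      omega
    · exact absurd (iff_of_false haS haT) ha
  · obtain ⟨a, ha⟩ : ∃ a, a ∉ S ∪ T := by
      by_contra! h
      have := (Finset.card_union_le S T).trans_lt hcard
      rw [Finset.eq_univ_of_forall h, Finset.card_univ] at this
      exact lt_irrefl _ this
    rw [Finset.mem_union, not_or] at ha
    exact ⟨a, by rwa [Finset.erase_eq_of_notMem ha.1, Finset.erase_eq_of_notMem ha.2]⟩

theorem Finset.sum_neg_one_pow_card_erase {ι : Type*} [Fintype ι] [DecidableEq ι]
    (S : Finset ι) :
    ∑ a, (-1 : ℤ) ^ (S.erase a).card = (-1) ^ S.card * (Fintype.card ι - 2 * S.card) := by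
  have hsign : ∀ a, (-1 : ℤ) ^ (S.erase a).card = (-1) ^ S.card * if a ∈ S then -1 else 1 := by
    intro a
    split_ifs with ha
    · rw [← Finset.card_erase_add_one ha, pow_succ, mul_assoc]
      norm_num
    · rw [Finset.erase_eq_of_notMem ha, mul_one]
  have hcount : ∑ a, (if a ∈ S then (-1 : ℤ) else 1) = Fintype.card ι - 2 * S.card := by
    rw [Finset.sum_ite, Finset.sum_const, Finset.sum_const, Finset.filter_mem_eq_inter,
      Finset.univ_inter, Finset.filter_not, Finset.filter_mem_eq_inter, Finset.univ_inter,
      Finset.card_univ_sdiff, nsmul_eq_mul, nsmul_eq_mul, Nat.cast_sub (Finset.card_le_univ S)]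
    ring
  rw [Finset.sum_congr rfl fun a _ => hsign a, ← Finset.mul_sum, hcount]

theorem Fintype.card_finset_card_le_eq_four_pow {ι : Type*} [Fintype ι] {m : ℕ}
    (hι : Fintype.card ι = 2 * m + 1) :
    Fintype.card {S : Finset ι // S.card ≤ m} = 4 ^ m := by
  classical
  rw [Fintype.card_subtype, ← Nat.sum_range_choose_halfway, ← hι, Finset.card_filter,
    ← Finset.powerset_univ, Finset.sum_powerset_apply_card (fun k => if k ≤ m then 1 else 0),
    Finset.card_univ]
  simp only [smul_eq_mul, mul_ite, mul_one, mul_zero]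
  rw [← Finset.sum_filter]
  congr 1
  ext k
  simp only [Finset.mem_filter, Finset.mem_range, Order.lt_add_one_iff, and_iff_right_iff_imp]
  omega

theorem Finset.sort_pair {ι : Type*} [LinearOrder ι] {a b : ι} (hab : a < b) :
    ({a, b} : Finset ι).sort (· ≤ ·) = [a, b] := by
  rw [Finset.sort_insert _ (by simpa using hab.le) (by simpa using hab.ne), Finset.sort_singleton]

theorem Finset.sum_lt_pairs_eq_sum_card_two {ι M : Type*} [LinearOrder ι] [Fintype ι]
    [AddCommMonoid M] (f : Finset ι → M) :
    ∑ p ∈ Finset.univ.filter (fun p : ι × ι => p.1 < p.2), f {p.1, p.2} =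
      ∑ S ∈ Finset.univ.filter (fun S : Finset ι => S.card = 2), f S := by
  refine Finset.sum_bij (fun p _ => {p.1, p.2}) (fun p hp => ?_) (fun p hp q hq h => ?_)
    (fun S hS => ?_) (fun _ _ => rfl)
  · simpa using Finset.card_pair (Finset.mem_filter.mp hp).2.ne
  · have := congrArg (fun S : Finset ι => S.sort (· ≤ ·)) h
    rw [Finset.sort_pair (Finset.mem_filter.mp hp).2, Finset.sort_pair (Finset.mem_filter.mp hq).2,
      List.cons_eq_cons, List.singleton_inj] at this
    exact Prod.ext this.1 this.2
  · obtain ⟨a, b, hab, rfl⟩ := Finset.card_eq_two.mp (Finset.mem_filter.mp hS).2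
    rcases hab.lt_or_gt with h | h
    · exact ⟨(a, b), by simpa using h, rfl⟩
    · exact ⟨(b, a), by simpa using h, Finset.pair_comm b a⟩

theorem Finset.countP_ne_sort {ι : Type*} [LinearOrder ι] (S : Finset ι) (a : ι) :
    (S.sort (· ≤ ·)).countP (· ≠ a) = (S.erase a).card := by
  rw [← Multiset.coe_countP, Finset.sort_eq, Multiset.countP_eq_card_filter, ← Finset.filter_val,
    Finset.filter_ne', Finset.card_val]

theorem OrthonormalBasis.sum_inner_smul_apply {κ E W : Type*} [Fintype κ] [NormedAddCommGroup E]
    [InnerProductSpace ℝ E] [AddCommGroup W] [Module ℝ W] (b : OrthonormalBasis κ ℝ E)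
    (f : E →ₗ[ℝ] W) (v : E) : ∑ i, ⟪b i, v⟫ • f (b i) = f v := by
  conv_rhs => rw [← b.sum_repr' v]
  simp

theorem LinearMap.trace_eq_zero_of_conj_eq_neg {K V : Type*} [Field K] [CharZero K]
    [AddCommGroup V] [Module K V] {u X : Module.End K V} (hu : u * u = 1)
    (h : u * X * u = -X) : LinearMap.trace K V X = 0 := by
  have : LinearMap.trace K V (u * X * u) = LinearMap.trace K V X := by
    rw [LinearMap.trace_mul_comm, ← mul_assoc, hu, one_mul]
  rw [h, map_neg] at this
  exact neg_eq_self.mp this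

section Ring

variable {ι A : Type*} [Ring A] (I : ι → A)

theorem mul_prod_map_eq_zsmul [DecidableEq ι]
    (hanti : ∀ a b, a ≠ b → I a * I b = -(I b * I a)) (a : ι) (l : List ι) :
    I a * (l.map I).prod = (-1 : ℤ) ^ l.countP (· ≠ a) • ((l.map I).prod * I a) := by
  induction l with
  | nil => simp
  | cons b l ih =>
    rw [List.map_cons, List.prod_cons]
    by_cases hba : b = a
    · subst hba
      rw [List.countP_cons_of_neg (by simp), mul_assoc (I b), ← mul_smul_comm, ← ih]
    · rw [← mul_assoc, hanti a b (Ne.symm hba), List.countP_cons_of_pos (by simpa using hba),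
        neg_mul, mul_assoc, ih, mul_smul_comm, pow_succ, mul_neg_one, neg_smul, mul_assoc]

theorem prod_map_reverse_mul_prod_map (hinv : ∀ a, I a * I a = 1) (l : List ι) :
    (l.reverse.map I).prod * (l.map I).prod = 1 := by
  induction l with
  | nil => simp
  | cons b l ih =>
    rw [List.reverse_cons, List.map_append, List.prod_append, List.map_cons, List.prod_cons]
    simp only [List.map_cons, List.map_nil, List.prod_cons, List.prod_nil, mul_one]
    rw [mul_assoc, ← mul_assoc (I b), hinv, one_mul, ih]

theorem prod_map_reverse_eq_zsmul [DecidableEq ι]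
    (hanti : ∀ a b, a ≠ b → I a * I b = -(I b * I a)) (l : List ι) (hl : l.Nodup) :
    (l.reverse.map I).prod = (-1 : ℤ) ^ l.length.choose 2 • (l.map I).prod := by
  induction l with
  | nil => simp
  | cons b l ih =>
    obtain ⟨hb, hl⟩ := List.nodup_cons.mp hl
    have hcount : l.countP (· ≠ b) = l.length :=
      List.countP_eq_length.mpr fun c hc => by simpa using ne_of_mem_of_not_mem hc hb
    have hcomm : (l.map I).prod * I b = (-1 : ℤ) ^ l.length • (I b * (l.map I).prod) := by
      rw [mul_prod_map_eq_zsmul I hanti, hcount, smul_smul, ← pow_add,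
        Even.neg_one_pow ⟨_, rfl⟩, one_smul]
    rw [List.reverse_cons, List.map_append, List.prod_append, ih hl]
    simp only [List.map_cons, List.map_nil, List.prod_cons, List.prod_nil, mul_one,
      List.length_cons]
    rw [smul_mul_assoc, hcomm, smul_smul, ← pow_add, Nat.choose_succ_succ', Nat.choose_one_right,
      add_comm]

variable [LinearOrder ι]

def cliffordMonomial (S : Finset ι) : A := ((S.sort (· ≤ ·)).map I).prod

def cliffordMonomialRev (S : Finset ι) : A := ((S.sort (· ≤ ·)).reverse.map I).prod

theorem mul_cliffordMonomial (hanti : ∀ a b, a ≠ b → I a * I b = -(I b * I a)) (a : ι)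
    (S : Finset ι) :
    I a * cliffordMonomial I S = (-1 : ℤ) ^ (S.erase a).card • (cliffordMonomial I S * I a) := by
  rw [cliffordMonomial, mul_prod_map_eq_zsmul I hanti, Finset.countP_ne_sort]

theorem mul_cliffordMonomialRev (hanti : ∀ a b, a ≠ b → I a * I b = -(I b * I a)) (a : ι)
    (S : Finset ι) :
    I a * cliffordMonomialRev I S =
      (-1 : ℤ) ^ (S.erase a).card • (cliffordMonomialRev I S * I a) := by
  rw [cliffordMonomialRev, mul_prod_map_eq_zsmul I hanti, List.countP_reverse,
    Finset.countP_ne_sort]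

theorem cliffordMonomialRev_mul_cliffordMonomial (hinv : ∀ a, I a * I a = 1) (S : Finset ι) :
    cliffordMonomialRev I S * cliffordMonomial I S = 1 :=
  prod_map_reverse_mul_prod_map I hinv _

theorem cliffordMonomialRev_eq_zsmul (hanti : ∀ a b, a ≠ b → I a * I b = -(I b * I a))
    (S : Finset ι) :
    cliffordMonomialRev I S = (-1 : ℤ) ^ S.card.choose 2 • cliffordMonomial I S := by
  rw [cliffordMonomialRev, prod_map_reverse_eq_zsmul I hanti _ (S.sort_nodup _),
    Finset.length_sort, cliffordMonomial]

theorem cliffordMonomial_pair {a b : ι} (hab : a < b) :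
    cliffordMonomial I {a, b} = I a * I b := by
  rw [cliffordMonomial, Finset.sort_pair hab]
  simp

theorem sum_mul_cliffordMonomial_mul [Fintype ι] (hanti : ∀ a b, a ≠ b → I a * I b = -(I b * I a))
    (hinv : ∀ a, I a * I a = 1) (S : Finset ι) :
    ∑ a, I a * cliffordMonomial I S * I a =
      ((-1) ^ S.card * (Fintype.card ι - 2 * S.card : ℤ)) • cliffordMonomial I S := by
  simp only [mul_cliffordMonomial I hanti, smul_mul_assoc, mul_assoc, hinv, mul_one,
    ← Finset.sum_smul, Finset.sum_neg_one_pow_card_erase]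

end Ring

section Trace

variable {ι K V : Type*} [LinearOrder ι] [Fintype ι] [Field K] [CharZero K] [AddCommGroup V]
  [Module K V] [FiniteDimensional K V] {I : ι → Module.End K V}

theorem trace_cliffordMonomialRev_mul_cliffordMonomial
    (hanti : ∀ a b, a ≠ b → I a * I b = -(I b * I a)) (hinv : ∀ a, I a * I a = 1)
    {S T : Finset ι} (hcard : S.card + T.card < Fintype.card ι) :
    LinearMap.trace K V (cliffordMonomialRev I T * cliffordMonomial I S) =
      if S = T then (Module.finrank K V : K) else 0 := by
  split_ifs with hST
  · rw [hST, cliffordMonomialRev_mul_cliffordMonomial I hinv, LinearMap.trace_one]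
  obtain ⟨a, hodd⟩ := Finset.exists_odd_card_erase_add_card_erase hST hcard
  refine LinearMap.trace_eq_zero_of_conj_eq_neg (hinv a) ?_
  calc I a * (cliffordMonomialRev I T * cliffordMonomial I S) * I a
      = (-1 : ℤ) ^ ((S.erase a).card + (T.erase a).card) •
          (cliffordMonomialRev I T * cliffordMonomial I S * (I a * I a)) := by
        rw [← mul_assoc, mul_cliffordMonomialRev I hanti, smul_mul_assoc, smul_mul_assoc,
          mul_assoc _ (I a), mul_cliffordMonomial I hanti, pow_add, mul_comm, ← smul_smul]
        simp only [mul_smul_comm, smul_mul_assoc, mul_assoc]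
    _ = -(cliffordMonomialRev I T * cliffordMonomial I S) := by
        rw [hinv, mul_one, hodd.neg_one_pow, neg_one_zsmul]

theorem trace_cliffordMonomialRev_mul_cliffordMonomial_of_card_le
    (hanti : ∀ a b, a ≠ b → I a * I b = -(I b * I a)) (hinv : ∀ a, I a * I a = 1) {m : ℕ}
    (hm : 2 * m < Fintype.card ι) (S T : {S : Finset ι // S.card ≤ m}) :
    LinearMap.trace K V (cliffordMonomialRev I T.1 * cliffordMonomial I S.1) =
      if S = T then (Module.finrank K V : K) else 0 := by
  have := S.2
  have := T.2
  have hcard : S.1.card + T.1.card < Fintype.card ι := by omega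
  simp [trace_cliffordMonomialRev_mul_cliffordMonomial hanti hinv hcard, Subtype.ext_iff]

theorem linearIndependent_cliffordMonomial [Nontrivial V]
    (hanti : ∀ a b, a ≠ b → I a * I b = -(I b * I a)) (hinv : ∀ a, I a * I a = 1) {m : ℕ}
    (hm : 2 * m < Fintype.card ι) :
    LinearIndependent K fun S : {S : Finset ι // S.card ≤ m} => cliffordMonomial I S.1 := by
  rw [Fintype.linearIndependent_iff]
  intro g hg T
  have h := congrArg (fun X => LinearMap.trace K V (cliffordMonomialRev I T.1 * X)) hg
  simpa [Finset.mul_sum, trace_cliffordMonomialRev_mul_cliffordMonomial_of_card_le hanti hinv hm,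
    Module.finrank_pos.ne'] using h

theorem sum_trace_smul_cliffordMonomial
    (hanti : ∀ a b, a ≠ b → I a * I b = -(I b * I a)) (hinv : ∀ a, I a * I a = 1) {m : ℕ}
    (hι : Fintype.card ι = 2 * m + 1) (hV : Module.finrank K V = 2 ^ m) (X : Module.End K V) :
    ∑ S : {S : Finset ι // S.card ≤ m},
        LinearMap.trace K V (cliffordMonomialRev I S.1 * X) • cliffordMonomial I S.1 =
      (Module.finrank K V : K) • X := by
  have : Nontrivial V := Module.nontrivial_of_finrank_pos (R := K) (by rw [hV]; positivity)
  have hm : 2 * m < Fintype.card ι := by omega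
  let F : Module.End K V →ₗ[K] Module.End K V := ∑ S : {S : Finset ι // S.card ≤ m},
    ((LinearMap.trace K V).comp (LinearMap.mulLeft K (cliffordMonomialRev I S.1))).smulRight
      (cliffordMonomial I S.1)
  have hF_apply : ∀ X, F X = ∑ S : {S : Finset ι // S.card ≤ m},
      LinearMap.trace K V (cliffordMonomialRev I S.1 * X) • cliffordMonomial I S.1 :=
    fun X => by simp [F]
  have hspan := (linearIndependent_cliffordMonomial hanti hinv hm).span_eq_top_of_card_eq_finrank'
    (by rw [Fintype.card_finset_card_le_eq_four_pow hι, Module.finrank_linearMap, hV, ← mul_pow]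
        norm_num)
  have hF : F = (Module.finrank K V : K) • LinearMap.id := by
    refine LinearMap.ext_on hspan ?_
    rintro _ ⟨T, rfl⟩
    simp [hF_apply, trace_cliffordMonomialRev_mul_cliffordMonomial_of_card_le hanti hinv hm]
  rw [← hF_apply, hF]
  rfl

end Trace

section InnerProduct

variable {ι V : Type*} [NormedAddCommGroup V] [InnerProductSpace ℝ V] {I : ι → Module.End ℝ V}

theorem inner_prod_map_apply (hsym : ∀ a, (I a).IsSymmetric) (l : List ι) (x y : V) :
    ⟪(l.map I).prod x, y⟫ = ⟪x, (l.reverse.map I).prod y⟫ := by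
  induction l generalizing y with
  | nil => simp
  | cons b l ih =>
    simp only [List.map_cons, List.prod_cons, List.reverse_cons, List.map_append, List.prod_append,
      List.map_nil, List.prod_nil, mul_one, Module.End.mul_apply, hsym b _ y, ih]

variable [LinearOrder ι]

theorem inner_cliffordMonomial_apply (hsym : ∀ a, (I a).IsSymmetric) (S : Finset ι) (x y : V) :
    ⟪cliffordMonomial I S x, y⟫ = ⟪x, cliffordMonomialRev I S y⟫ :=
  inner_prod_map_apply hsym _ x y

theorem cliffordMonomial_isSymmetric (hsym : ∀ a, (I a).IsSymmetric)
    (hanti : ∀ a b, a ≠ b → I a * I b = -(I b * I a)) {S : Finset ι}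
    (hS : Even (S.card.choose 2)) : (cliffordMonomial I S).IsSymmetric := fun x y => by
  rw [inner_cliffordMonomial_apply hsym, cliffordMonomialRev_eq_zsmul I hanti, hS.neg_one_pow,
    one_smul]

variable [Fintype ι] [FiniteDimensional ℝ V]

theorem sum_inner_smul_cliffordMonomial (hsym : ∀ a, (I a).IsSymmetric)
    (hanti : ∀ a b, a ≠ b → I a * I b = -(I b * I a)) (hinv : ∀ a, I a * I a = 1) {m : ℕ}
    (hι : Fintype.card ι = 2 * m + 1) (hV : Module.finrank ℝ V = 2 ^ m) (x a : V) :
    ∑ S : {S : Finset ι // S.card ≤ m}, ⟪cliffordMonomial I S.1 x, a⟫ • cliffordMonomial I S.1 =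
      (Module.finrank ℝ V : ℝ) • (innerₗ V x).smulRight a := by
  have htrace : ∀ S : Finset ι, LinearMap.trace ℝ V
      (cliffordMonomialRev I S * (innerₗ V x).smulRight a) = ⟪cliffordMonomial I S x, a⟫ := by
    intro S
    have : cliffordMonomialRev I S * (innerₗ V x).smulRight a =
        (innerₗ V x).smulRight (cliffordMonomialRev I S a) := LinearMap.ext fun v => by simp
    rw [this, LinearMap.trace_smulRight, innerₗ_apply_apply, inner_cliffordMonomial_apply hsym]
  simp_rw [← htrace]
  exact sum_trace_smul_cliffordMonomial hanti hinv hι hV _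

theorem sum_inner_smul_cliffordMonomial_apply (hsym : ∀ a, (I a).IsSymmetric)
    (hanti : ∀ a b, a ≠ b → I a * I b = -(I b * I a)) (hinv : ∀ a, I a * I a = 1) {m : ℕ}
    (hι : Fintype.card ι = 2 * m + 1) (hV : Module.finrank ℝ V = 2 ^ m) (x a y : V) :
    ∑ S : {S : Finset ι // S.card ≤ m}, ⟪cliffordMonomial I S.1 x, a⟫ • cliffordMonomial I S.1 y =
      (Module.finrank ℝ V * ⟪x, y⟫) • a := by
  have := LinearMap.congr_fun (sum_inner_smul_cliffordMonomial hsym hanti hinv hι hV x a) y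
  simpa [smul_smul] using this

theorem sum_weighted_inner_smul_cliffordMonomial_apply (hsym : ∀ a, (I a).IsSymmetric)
    (hanti : ∀ a b, a ≠ b → I a * I b = -(I b * I a)) (hinv : ∀ a, I a * I a = 1) {m : ℕ}
    (hι : Fintype.card ι = 2 * m + 1) (hV : Module.finrank ℝ V = 2 ^ m) (x a y : V) :
    ∑ S : {S : Finset ι // S.card ≤ m},
        ((-1) ^ S.1.card * (Fintype.card ι - 2 * S.1.card : ℝ) * ⟪cliffordMonomial I S.1 x, a⟫) •
          cliffordMonomial I S.1 y =
      (Module.finrank ℝ V : ℝ) • ∑ b, ⟪I b x, y⟫ • I b a := by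
  have := congrArg (fun X => (∑ b, I b * X * I b) y)
    (sum_inner_smul_cliffordMonomial hsym hanti hinv hι hV x a)
  simp only [Finset.mul_sum, Finset.sum_mul, mul_smul_comm, smul_mul_assoc] at this
  rw [Finset.sum_comm] at this
  simp only [← Finset.smul_sum, sum_mul_cliffordMonomial_mul I hanti hinv] at this
  simp only [← Int.cast_smul_eq_zsmul ℝ, LinearMap.sum_apply, LinearMap.smul_apply,
    Module.End.mul_apply, LinearMap.smulRight_apply, innerₗ_apply_apply, map_smul, smul_smul,
    ← hsym _ x] at this
  push_cast at this
  simpa [mul_comm] using this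

end InnerProduct

local notation "ℝ¹⁶" => EuclideanSpace ℝ (Fin 16)

section Kaehler

local notation "e" => EuclideanSpace.basisFun (Fin 16) ℝ
local notation "ι" => ExteriorAlgebra.ι ℝ (M := ℝ¹⁶)

theorem kaehlerFormR16_eq_sum (J : Module.End ℝ ℝ¹⁶) :
    kaehlerFormR16 J = ∑ k, ι (e k) * ι (J (e k)) := by
  simp [kaehlerFormR16]

theorem kaehlerFormR16_eq_zero_of_isSymmetric {A : Module.End ℝ ℝ¹⁶} (hA : A.IsSymmetric) :
    kaehlerFormR16 A = 0 := by
  have hexp : kaehlerFormR16 A = ∑ k, ∑ i, ⟪e i, A (e k)⟫ • (ι (e k) * ι (e i)) := by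
    simp only [kaehlerFormR16_eq_sum, ← OrthonormalBasis.sum_inner_smul_apply e ι (A _),
      Finset.mul_sum, mul_smul_comm]
  have hneg : kaehlerFormR16 A = -kaehlerFormR16 A := by
    conv_lhs => rw [hexp, Finset.sum_comm]
    rw [hexp]
    simp only [← Finset.sum_neg_distrib, ← smul_neg]
    refine Finset.sum_congr rfl fun k _ => Finset.sum_congr rfl fun i _ => ?_
    rw [real_inner_comm, ← hA, real_inner_comm, ← neg_eq_of_add_eq_zero_left
      (ExteriorAlgebra.ι_add_mul_swap (e i) (e k))]
  have : IsAddTorsionFree (ExteriorAlgebra ℝ ℝ¹⁶) := .of_isTorsionFree ℝ _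
  exact self_eq_neg.mp hneg

theorem kaehlerFormR16_sq (A : Module.End ℝ ℝ¹⁶) :
    kaehlerFormR16 A ^ 2 = -∑ k, ∑ l, ι (e k) * ι (e l) * ι (A (e k)) * ι (A (e l)) := by
  rw [sq, kaehlerFormR16_eq_sum, Finset.sum_mul_sum, ← Finset.sum_neg_distrib]
  refine Finset.sum_congr rfl fun k _ => ?_
  rw [← Finset.sum_neg_distrib]
  refine Finset.sum_congr rfl fun l _ => ?_
  rw [mul_assoc (ι (e k)) (ι (e l)), ← neg_eq_of_add_eq_zero_left
    (ExteriorAlgebra.ι_add_mul_swap (e l) (A (e k)))]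
  simp only [mul_neg, neg_mul, neg_neg, mul_assoc]

section Contraction

variable {τ κ : Type*} [Fintype κ] (s : Finset τ) (c : τ → ℝ) (A : τ → Module.End ℝ ℝ¹⁶)
  (B B' : κ → Module.End ℝ ℝ¹⁶)

theorem sum_smul_mul_ι_mul_ι_of_fierz
    (h : ∀ x a y, ∑ T ∈ s, (c T * ⟪A T x, a⟫) • A T y = ∑ j, ⟪B j x, y⟫ • B' j a)
    (P : ExteriorAlgebra ℝ ℝ¹⁶) (x y : ℝ¹⁶) :
    ∑ T ∈ s, c T • (P * ι (A T x) * ι (A T y)) = ∑ j, ⟪B j x, y⟫ • (P * kaehlerFormR16 (B' j)) := by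
  calc ∑ T ∈ s, c T • (P * ι (A T x) * ι (A T y))
      = ∑ i, P * ι (e i) * ι (∑ T ∈ s, (c T * ⟪A T x, e i⟫) • A T y) := by
        simp only [map_sum, map_smul, Finset.mul_sum, mul_smul_comm]
        rw [Finset.sum_comm]
        refine Finset.sum_congr rfl fun T _ => ?_
        rw [← OrthonormalBasis.sum_inner_smul_apply e ι (A T x)]
        simp only [Finset.mul_sum, Finset.sum_mul, Finset.smul_sum, mul_smul_comm, smul_mul_assoc,
          smul_smul, real_inner_comm]
    _ = ∑ j, ⟪B j x, y⟫ • (P * kaehlerFormR16 (B' j)) := by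
        simp only [h, kaehlerFormR16_eq_sum, map_sum, map_smul, Finset.mul_sum, mul_smul_comm,
          Finset.smul_sum, mul_assoc]
        rw [Finset.sum_comm]

theorem sum_smul_kaehlerFormR16_sq_of_fierz
    (h : ∀ x a y, ∑ T ∈ s, (c T * ⟪A T x, a⟫) • A T y = ∑ j, ⟪B j x, y⟫ • B' j a) :
    ∑ T ∈ s, c T • kaehlerFormR16 (A T) ^ 2 =
      -∑ j, kaehlerFormR16 (B j) * kaehlerFormR16 (B' j) := by
  simp only [kaehlerFormR16_sq, smul_neg, Finset.sum_neg_distrib, Finset.smul_sum]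
  rw [Finset.sum_comm]
  simp_rw [Finset.sum_comm (s := s)]
  simp only [sum_smul_mul_ι_mul_ι_of_fierz s c A B B' h]
  rw [neg_inj]
  conv_lhs => enter [2, k]; rw [Finset.sum_comm]
  rw [Finset.sum_comm]
  refine Finset.sum_congr rfl fun j _ => ?_
  rw [kaehlerFormR16_eq_sum (B j), Finset.sum_mul]
  refine Finset.sum_congr rfl fun k _ => ?_
  rw [← OrthonormalBasis.sum_inner_smul_apply e ι (B j (e k)), Finset.mul_sum, Finset.sum_mul]
  refine Finset.sum_congr rfl fun l _ => ?_
  rw [real_inner_comm, mul_smul_comm, smul_mul_assoc]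

end Contraction

end Kaehler

section Spin9

variable {ι : Type*} [LinearOrder ι] [Fintype ι] {I : ι → Module.End ℝ ℝ¹⁶}

theorem sum_kaehlerFormR16_sq_cliffordMonomial_eq_zero (hι : Fintype.card ι = 9)
    (hsym : ∀ a, (I a).IsSymmetric) (hinv : ∀ a, I a * I a = 1)
    (hanti : ∀ a b, a ≠ b → I a * I b = -(I b * I a)) :
    ∑ S : {S : Finset ι // S.card ≤ 4}, kaehlerFormR16 (cliffordMonomial I S.1) ^ 2 = 0 := by
  have := sum_smul_kaehlerFormR16_sq_of_fierz Finset.univ (fun _ => 1)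
    (fun S : {S : Finset ι // S.card ≤ 4} => cliffordMonomial I S.1) (fun _ : Unit => LinearMap.id)
    (fun _ => (16 : ℝ) • LinearMap.id) fun x a y => by
      simpa [smul_smul, mul_comm] using
        sum_inner_smul_cliffordMonomial_apply hsym hanti hinv (m := 4) hι (by simp) x a y
  simpa [kaehlerFormR16_eq_zero_of_isSymmetric LinearMap.IsSymmetric.id] using this

theorem sum_weighted_smul_kaehlerFormR16_sq_cliffordMonomial_eq_zero (hι : Fintype.card ι = 9)
    (hsym : ∀ a, (I a).IsSymmetric) (hinv : ∀ a, I a * I a = 1)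
    (hanti : ∀ a b, a ≠ b → I a * I b = -(I b * I a)) :
    ∑ S : {S : Finset ι // S.card ≤ 4},
      ((-1) ^ S.1.card * (9 - 2 * S.1.card : ℝ)) • kaehlerFormR16 (cliffordMonomial I S.1) ^ 2 =
        0 := by
  have := sum_smul_kaehlerFormR16_sq_of_fierz Finset.univ
    (fun S : {S : Finset ι // S.card ≤ 4} => (-1) ^ S.1.card * (9 - 2 * S.1.card : ℝ))
    (fun S => cliffordMonomial I S.1) I (fun b => (16 : ℝ) • I b) fun x a y => by
      simpa [hι, Finset.smul_sum, smul_comm (16 : ℝ)] using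
        sum_weighted_inner_smul_cliffordMonomial_apply hsym hanti hinv (m := 4) hι (by simp) x a y
  simpa [kaehlerFormR16_eq_zero_of_isSymmetric (hsym _)] using this

theorem sum_card_two_kaehlerFormR16_sq_cliffordMonomial_eq_zero (hι : Fintype.card ι = 9)
    (hsym : ∀ a, (I a).IsSymmetric) (hinv : ∀ a, I a * I a = 1)
    (hanti : ∀ a b, a ≠ b → I a * I b = -(I b * I a)) :
    ∑ S ∈ Finset.univ.filter (fun S : Finset ι => S.card = 2),
      kaehlerFormR16 (cliffordMonomial I S) ^ 2 = 0 := by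
  set κ := fun S : Finset ι => kaehlerFormR16 (cliffordMonomial I S) ^ 2 with hκ
  have hgrade : ∀ S : {S : Finset ι // S.card ≤ 4},
      (3 + (-1) ^ S.1.card * (9 - 2 * S.1.card : ℝ)) • κ S.1 =
        if S.1.card = 2 then (8 : ℝ) • κ S.1 else 0 := by
    rintro ⟨S, hS⟩
    dsimp only
    -- `3 + (-1)ᵏ (9 - 2k)` is `12, -4, 8, 0, 4` for `k = 0, …, 4`, while `κ S = 0` for
    -- `k ∈ {0, 1, 4}`.
    have hκS : Even (S.card.choose 2) → κ S = 0 := fun h => by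
      simp [hκ, kaehlerFormR16_eq_zero_of_isSymmetric (cliffordMonomial_isSymmetric hsym hanti h)]
    obtain ⟨k, hk⟩ : ∃ k, S.card = k := ⟨_, rfl⟩
    rw [hk] at hS hκS ⊢
    interval_cases k <;> norm_num <;> exact hκS (by decide)
  have h8 : (8 : ℝ) • ∑ S ∈ Finset.univ.filter (fun S : Finset ι => S.card = 2), κ S = 0 := by
    calc (8 : ℝ) • ∑ S ∈ Finset.univ.filter (fun S : Finset ι => S.card = 2), κ S
        = ∑ S : {S : Finset ι // S.card ≤ 4}, if S.1.card = 2 then (8 : ℝ) • κ S.1 else 0 := by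
          rw [Finset.smul_sum, ← Finset.sum_subtype (Finset.univ.filter (·.card ≤ 4)) (by simp)
            (fun S => if S.card = 2 then (8 : ℝ) • κ S else 0), ← Finset.sum_filter,
            Finset.filter_filter]
          exact Finset.sum_congr (Finset.filter_congr fun S _ => by omega) fun _ _ => rfl
      _ = (3 : ℝ) • ∑ S : {S : Finset ι // S.card ≤ 4}, κ S.1 + ∑ S : {S : Finset ι // S.card ≤ 4},
            ((-1) ^ S.1.card * (9 - 2 * S.1.card : ℝ)) • κ S.1 := by
          simp only [← hgrade, add_smul, Finset.sum_add_distrib, Finset.smul_sum]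
      _ = 0 := by
          rw [sum_kaehlerFormR16_sq_cliffordMonomial_eq_zero hι hsym hinv hanti,
            sum_weighted_smul_kaehlerFormR16_sq_cliffordMonomial_eq_zero hι hsym hinv hanti]
          simp
  exact (smul_eq_zero.mp h8).resolve_left (by norm_num)

end Spin9

/-- For the skew-symmetric `9 × 9` matrix `ψᶜ` of Kähler 2-forms of the 36
complex structures `J_{αβ} = Iₐ∘I_β` of a Spin(9) Clifford system `I₁,…,I₉`
on `ℝ¹⁶`, the second coefficient of the characteristic polynomial vanishes:
`τ₂(ψᶜ) = Σ_{α<β} ψ_{αβ}² = 0`. -/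
theorem tau2_psiC_eq_zero
    (I : Fin 9 → Module.End ℝ (EuclideanSpace ℝ (Fin 16)))
    (hsa : ∀ a (x y : EuclideanSpace ℝ (Fin 16)),
      (inner ℝ (I a x) y : ℝ) = inner ℝ x (I a y))
    (hinv : ∀ a, I a * I a = 1)
    (hanti : ∀ a b, a ≠ b → I a * I b = -(I b * I a)) :
    ∑ p ∈ Finset.univ.filter (fun p : Fin 9 × Fin 9 => p.1 < p.2),
      kaehlerFormR16 (I p.1 * I p.2) ^ 2 = 0 := by
  calc ∑ p ∈ Finset.univ.filter (fun p : Fin 9 × Fin 9 => p.1 < p.2),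
        kaehlerFormR16 (I p.1 * I p.2) ^ 2
      = ∑ p ∈ Finset.univ.filter (fun p : Fin 9 × Fin 9 => p.1 < p.2),
        kaehlerFormR16 (cliffordMonomial I {p.1, p.2}) ^ 2 :=
        Finset.sum_congr rfl fun p hp => by
          rw [cliffordMonomial_pair I (Finset.mem_filter.mp hp).2]
    _ = ∑ S ∈ Finset.univ.filter (fun S : Finset (Fin 9) => S.card = 2),
        kaehlerFormR16 (cliffordMonomial I S) ^ 2 :=
        Finset.sum_lt_pairs_eq_sum_card_two fun S => kaehlerFormR16 (cliffordMonomial I S) ^ 2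
    _ = 0 :=
        sum_card_two_kaehlerFormR16_sq_cliffordMonomial_eq_zero (Fintype.card_fin 9) hsa hinv hanti
end
end
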